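/- Assume ε̃ ≥ 0 and that the uniform Hessian concentration bound holds with level ϱ > 0. Then for all x, z ∈ ℝⁿ: D_f(x,z) ≤ (3 + ε̃ + ϱ·max(‖x̄‖²/3 + ‖ε‖_∞, 1)) · D_ψ(x,z). -/

import Mathlib

/-!
Along the segment `z + t (x - z)` both `f` and `ψ` are quartic polynomials in `t`, so each
Bregman divergence equals `∫₀¹ (1 - t) ⟨u, ∇²φ(z + t u) u⟩ dt` with `u = x - z` and an integrand
that is quadratic in `t`; the quadrature rule `(1/6)·g(0) + (1/3)·g(1/2)` integrates it exactly.
Hence it suffices to dominate the Hessian forms pointwise, `⟨u, ∇²f(w) u⟩ ≤ L ⟨u, ∇²ψ(w) u⟩`,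
which follows from the concentration bound by homogeneity in `u`, using `ε̃ ≥ 0` and `ϱ ≥ 0`.
-/

open scoped RealInnerProductSpace BigOperators

noncomputable def phaseObj (m n : ℕ) (a : Fin m → EuclideanSpace ℝ (Fin n))
    (xbar : EuclideanSpace ℝ (Fin n)) (ε : Fin m → ℝ)
    (x : EuclideanSpace ℝ (Fin n)) : ℝ :=
  (1 / (4 * (m : ℝ))) * ∑ r, (⟪a r, x⟫ ^ 2 - ⟪a r, xbar⟫ ^ 2) ^ 2
    - (1 / (2 * (m : ℝ))) * ∑ r, ε r * (⟪a r, x⟫ ^ 2 - ⟪a r, xbar⟫ ^ 2)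
    + (∑ r, ε r ^ 2) / (4 * (m : ℝ))

noncomputable def phaseGrad (m n : ℕ) (a : Fin m → EuclideanSpace ℝ (Fin n))
    (xbar : EuclideanSpace ℝ (Fin n)) (ε : Fin m → ℝ)
    (x : EuclideanSpace ℝ (Fin n)) : EuclideanSpace ℝ (Fin n) :=
  (1 / (m : ℝ)) • ∑ r, ((⟪a r, x⟫ ^ 2 - ⟪a r, xbar⟫ ^ 2 - ε r) * ⟪a r, x⟫) • a r

noncomputable def entropy (n : ℕ) (x : EuclideanSpace ℝ (Fin n)) : ℝ :=
  (1 / 4) * ‖x‖ ^ 4 + (1 / 2) * ‖x‖ ^ 2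

noncomputable def entropyGrad (n : ℕ) (x : EuclideanSpace ℝ (Fin n)) :
    EuclideanSpace ℝ (Fin n) :=
  (‖x‖ ^ 2 + 1) • x

/-- Bregman divergence of the noisy phase-retrieval objective `f`. -/
noncomputable def Df (m n : ℕ) (a : Fin m → EuclideanSpace ℝ (Fin n))
    (xbar : EuclideanSpace ℝ (Fin n)) (ε : Fin m → ℝ)
    (x z : EuclideanSpace ℝ (Fin n)) : ℝ :=
  phaseObj m n a xbar ε x - phaseObj m n a xbar ε z - ⟪phaseGrad m n a xbar ε z, x - z⟫

/-- Bregman divergence of the entropy `ψ`. -/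
noncomputable def Dψ (n : ℕ) (x z : EuclideanSpace ℝ (Fin n)) : ℝ :=
  entropy n x - entropy n z - ⟪entropyGrad n z, x - z⟫


/-- The Hessian quadratic form `⟨u, ∇²f(x) u⟩` of the noisy phase-retrieval objective. -/
noncomputable def hessQuad (m n : ℕ) (a : Fin m → EuclideanSpace ℝ (Fin n))
    (xbar : EuclideanSpace ℝ (Fin n)) (ε : Fin m → ℝ)
    (x u : EuclideanSpace ℝ (Fin n)) : ℝ :=
  (1 / (m : ℝ)) * ∑ r, (3 * ⟪a r, x⟫ ^ 2 - ⟪a r, xbar⟫ ^ 2 - ε r) * ⟪a r, u⟫ ^ 2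

/-- The uniform Hessian concentration bound at level `ϱ`. -/
def HessConc (m n : ℕ) (a : Fin m → EuclideanSpace ℝ (Fin n))
    (xbar : EuclideanSpace ℝ (Fin n)) (ε : Fin m → ℝ) (ϱ : ℝ) : Prop :=
  ∀ x u : EuclideanSpace ℝ (Fin n), ‖u‖ = 1 →
    |hessQuad m n a xbar ε x u -
        (6 * ⟪x, u⟫ ^ 2 + 3 * ‖x‖ ^ 2 - 2 * ⟪xbar, u⟫ ^ 2 - ‖xbar‖ ^ 2
          - (1 / (m : ℝ)) * ∑ r, ε r)| ≤
      ϱ * (‖x‖ ^ 2 + ‖xbar‖ ^ 2 / 3 + ⨆ s, |ε s|)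

/-- The Hessian quadratic form `⟨u, ∇²ψ(x) u⟩` of the entropy `ψ`. -/
noncomputable def entropyHessQuad (n : ℕ) (x u : EuclideanSpace ℝ (Fin n)) : ℝ :=
  ‖x‖ ^ 2 * ‖u‖ ^ 2 + 2 * ⟪x, u⟫ ^ 2 + ‖u‖ ^ 2

section PhaseRetrieval

variable {m n : ℕ} (a : Fin m → EuclideanSpace ℝ (Fin n)) (xbar : EuclideanSpace ℝ (Fin n))
  (ε : Fin m → ℝ)

lemma inner_phaseGrad (z w : EuclideanSpace ℝ (Fin n)) :
    ⟪phaseGrad m n a xbar ε z, w⟫ =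
      (1 / (m : ℝ)) * ∑ r, (⟪a r, z⟫ ^ 2 - ⟪a r, xbar⟫ ^ 2 - ε r) * ⟪a r, z⟫ * ⟪a r, w⟫ := by
  simp only [phaseGrad, real_inner_smul_left, sum_inner]

lemma Df_eq_quadrature (x z : EuclideanSpace ℝ (Fin n)) :
    Df m n a xbar ε x z =
      (1 / 6) * hessQuad m n a xbar ε z (x - z)
        + (1 / 3) * hessQuad m n a xbar ε (z + (1 / 2 : ℝ) • (x - z)) (x - z) := by
  simp only [Df, phaseObj, hessQuad, inner_phaseGrad, inner_sub_right, inner_add_right,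
    real_inner_smul_right, Finset.mul_sum, Finset.sum_div, ← Finset.sum_add_distrib,
    ← Finset.sum_sub_distrib]
  exact Finset.sum_congr rfl fun r _ => by ring

lemma hessQuad_smul_right (x u : EuclideanSpace ℝ (Fin n)) (c : ℝ) :
    hessQuad m n a xbar ε x (c • u) = c ^ 2 * hessQuad m n a xbar ε x u := by
  simp only [hessQuad, real_inner_smul_right, Finset.mul_sum]
  exact Finset.sum_congr rfl fun r _ => by ring

end PhaseRetrieval

lemma Dψ_eq_quadrature {n : ℕ} (x z : EuclideanSpace ℝ (Fin n)) :
    Dψ n x z =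
      (1 / 6) * entropyHessQuad n z (x - z)
        + (1 / 3) * entropyHessQuad n (z + (1 / 2 : ℝ) • (x - z)) (x - z) := by
  have norm_sq : ∀ w : EuclideanSpace ℝ (Fin n), ‖w‖ ^ 2 = ⟪w, w⟫ := fun w =>
    (real_inner_self_eq_norm_sq w).symm
  have norm_pow_four : ∀ w : EuclideanSpace ℝ (Fin n), ‖w‖ ^ 4 = ⟪w, w⟫ ^ 2 := fun w => by
    rw [← norm_sq]; ring
  simp only [Dψ, entropy, entropyGrad, entropyHessQuad, norm_pow_four, norm_sq,
    real_inner_smul_left, real_inner_smul_right, inner_sub_left, inner_sub_right,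
    inner_add_left, inner_add_right, real_inner_comm z x]
  ring

lemma entropyHessQuad_smul_right {n : ℕ} (x u : EuclideanSpace ℝ (Fin n)) (c : ℝ) :
    entropyHessQuad n x (c • u) = c ^ 2 * entropyHessQuad n x u := by
  simp only [entropyHessQuad, norm_smul, real_inner_smul_right, mul_pow, Real.norm_eq_abs,
    sq_abs]
  ring

section HessianComparison

variable {m n : ℕ} {a : Fin m → EuclideanSpace ℝ (Fin n)} {xbar : EuclideanSpace ℝ (Fin n)}
  {ε : Fin m → ℝ} {ϱ : ℝ}

lemma hessQuad_le_of_norm_eq_one (hεt : 0 ≤ (1 / (m : ℝ)) * ∑ r, ε r) (hϱ : 0 ≤ ϱ)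
    (hconc : HessConc m n a xbar ε ϱ) (w : EuclideanSpace ℝ (Fin n))
    {u : EuclideanSpace ℝ (Fin n)} (hu : ‖u‖ = 1) :
    hessQuad m n a xbar ε w u ≤
      (3 + (1 / (m : ℝ)) * ∑ r, ε r + ϱ * max (‖xbar‖ ^ 2 / 3 + ⨆ s, |ε s|) 1)
        * entropyHessQuad n w u := by
  set εt := (1 / (m : ℝ)) * ∑ r, ε r
  set M := max (‖xbar‖ ^ 2 / 3 + ⨆ s, |ε s|) 1
  have hconc_upper := (abs_le.mp (hconc w u hu)).2
  have ϱ_norm_sq_le : ϱ * ‖w‖ ^ 2 ≤ ϱ * M * ‖w‖ ^ 2 := by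
    have := mul_le_mul_of_nonneg_left (le_max_right (‖xbar‖ ^ 2 / 3 + ⨆ s, |ε s|) 1) hϱ
    nlinarith [sq_nonneg ‖w‖]
  have ϱ_offset_le : ϱ * (‖xbar‖ ^ 2 / 3 + ⨆ s, |ε s|) ≤ ϱ * M :=
    mul_le_mul_of_nonneg_left (le_max_left _ _) hϱ
  have ϱM_nonneg : 0 ≤ ϱ * M := mul_nonneg hϱ (le_trans zero_le_one (le_max_right _ _))
  rw [entropyHessQuad, hu]
  nlinarith [sq_nonneg ⟪w, u⟫, sq_nonneg ⟪xbar, u⟫, sq_nonneg ‖w‖, sq_nonneg ‖xbar‖,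
    mul_nonneg hεt (sq_nonneg ‖w‖), mul_nonneg hεt (sq_nonneg ⟪w, u⟫),
    mul_nonneg ϱM_nonneg (sq_nonneg ⟪w, u⟫)]

lemma hessQuad_le_entropyHessQuad (hεt : 0 ≤ (1 / (m : ℝ)) * ∑ r, ε r) (hϱ : 0 ≤ ϱ)
    (hconc : HessConc m n a xbar ε ϱ) (w u : EuclideanSpace ℝ (Fin n)) :
    hessQuad m n a xbar ε w u ≤
      (3 + (1 / (m : ℝ)) * ∑ r, ε r + ϱ * max (‖xbar‖ ^ 2 / 3 + ⨆ s, |ε s|) 1)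
        * entropyHessQuad n w u := by
  rcases eq_or_ne u 0 with rfl | hu
  · simp [hessQuad, entropyHessQuad]
  have hu_eq : u = ‖u‖ • (‖u‖⁻¹ • u) := by
    rw [smul_smul, mul_inv_cancel₀ (norm_ne_zero_iff.mpr hu), one_smul]
  rw [hu_eq, hessQuad_smul_right, entropyHessQuad_smul_right, mul_left_comm]
  exact mul_le_mul_of_nonneg_left
    (hessQuad_le_of_norm_eq_one hεt hϱ hconc w (norm_smul_inv_norm hu)) (sq_nonneg _)

end HessianComparison

theorem stmt11_general (n m : ℕ) (a : Fin m → EuclideanSpace ℝ (Fin n))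
    (xbar : EuclideanSpace ℝ (Fin n)) (ε : Fin m → ℝ)
    (hεt : 0 ≤ (1 / (m : ℝ)) * ∑ r, ε r)
    (ϱ : ℝ) (hϱ : 0 < ϱ) (hconc : HessConc m n a xbar ε ϱ) :
    ∀ x z : EuclideanSpace ℝ (Fin n),
      Df m n a xbar ε x z ≤
        (3 + (1 / (m : ℝ)) * ∑ r, ε r
          + ϱ * max (‖xbar‖ ^ 2 / 3 + ⨆ s, |ε s|) 1) * Dψ n x z := by
  intro x z
  rw [Df_eq_quadrature, Dψ_eq_quadrature]
  have at_start := hessQuad_le_entropyHessQuad hεt hϱ.le hconc z (x - z)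
  have at_midpoint :=
    hessQuad_le_entropyHessQuad hεt hϱ.le hconc (z + (1 / 2 : ℝ) • (x - z)) (x - z)
  linear_combination (1 / 6 : ℝ) * at_start + (1 / 3 : ℝ) * at_midpoint

/-- relative smoothness of `f` w.r.t. `ψ` under Hessian concentration. -/
theorem stmt11 (n m : ℕ) (hm : 1 ≤ m) (a : Fin m → EuclideanSpace ℝ (Fin n))
    (xbar : EuclideanSpace ℝ (Fin n)) (ε : Fin m → ℝ)
    (hεt : 0 ≤ (1 / (m : ℝ)) * ∑ r, ε r)
    (ϱ : ℝ) (hϱ : 0 < ϱ) (hconc : HessConc m n a xbar ε ϱ) :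
    ∀ x z : EuclideanSpace ℝ (Fin n),
      Df m n a xbar ε x z ≤
        (3 + (1 / (m : ℝ)) * ∑ r, ε r
          + ϱ * max (‖xbar‖ ^ 2 / 3 + ⨆ s, |ε s|) 1) * Dψ n x z :=
  stmt11_general n m a xbar ε hεt ϱ hϱ hconc
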